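/- arXiv:2402.18501 — 2 statements merged into one kernel-verified Lean document; each statement's English description precedes it below -/
import Mathlib

section
/- Let P = Σ_{i,j} (-1)^{p(j)} E_{ij}⊗E_{ji} and Q = Σ_{i,j} (-1)^{p(i)p(j)+p(i)+p(j)} E_{ij}⊗E_{-i,-j} in the super tensor square of End(ℂ^{N|N}). Then PQ = -Q, QP = Q, and Q² = 0. -/
open Matrix BigOperators

/-- Index set `{±1, …, ±N}`: `inl k` is the positive index `k+1`, `inr k` the negative `-(k+1)`. -/
abbrev Idx (N : ℕ) := Fin N ⊕ Fin N

/-- Parity: `0` for positive indices, `1` for negative ones. -/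
def par {N : ℕ} : Idx N → ℕ := Sum.elim (fun _ => 0) (fun _ => 1)

/-- Negation `i ↦ -i` on the index set. -/
def nn {N : ℕ} : Idx N → Idx N := Sum.swap

/-- The super (Koszul-signed) tensor product `A ⊗ B` of two matrices, realized as an
operator on `(ℂ^{N|N})^{⊗2}`: on matrix-unit components the sign is
`(-1)^{deg(column of A) · deg B}`, i.e. `(X⊗Y)(x⊗y) = (-1)^{deg x · deg Y} Xx ⊗ Yy`. -/
def stp {N : ℕ} (A B : Matrix (Idx N) (Idx N) ℂ) :
    Matrix (Idx N × Idx N) (Idx N × Idx N) ℂ :=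
  Matrix.of fun r c =>
    A r.1 c.1 * B r.2 c.2 * (-1 : ℂ) ^ (par c.1 * (par r.2 + par c.2))

/-- `P = Σ_{i,j} (-1)^{p(j)} E_{ij} ⊗ E_{ji}` in the super tensor square of `End(ℂ^{N|N})`. -/
noncomputable def P2 (N : ℕ) : Matrix (Idx N × Idx N) (Idx N × Idx N) ℂ :=
  ∑ i : Idx N, ∑ j : Idx N,
    ((-1 : ℂ) ^ par j) • stp (single i j 1) (single j i 1)

/-- `Q = Σ_{i,j} (-1)^{p(i)p(j)+p(i)+p(j)} E_{ij} ⊗ E_{-i,-j}` in the super tensor square. -/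
noncomputable def Q2 (N : ℕ) : Matrix (Idx N × Idx N) (Idx N × Idx N) ℂ :=
  ∑ i : Idx N, ∑ j : Idx N,
    ((-1 : ℂ) ^ (par i * par j + par i + par j)) •
      stp (single i j 1) (single (nn i) (nn j) 1)

lemma par01 {N : ℕ} (a : Idx N) : par a = 0 ∨ par a = 1 := by
  rcases a with a | a <;> simp [par]

lemma par_nn {N : ℕ} (a : Idx N) : par (nn a) = 1 - par a := by
  rcases a with a | a <;> simp [par, nn]

lemma sgn1 {N : ℕ} (x y : Idx N) :
    (-1:ℂ) ^ par y * (-1:ℂ) ^ (par y * (par y + par x)) = (-1:ℂ)^(par x * par y) := by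
  rcases par01 x with hx | hx <;> rcases par01 y with hy | hy <;>
    simp [hx, hy, pow_add, pow_succ]

lemma P2_apply (N : ℕ) (a b c d : Idx N) :
    P2 N (a,b) (c,d) = if c = b ∧ d = a then (-1:ℂ)^(par a * par b) else 0 := by
  simp only [P2, Matrix.sum_apply, Matrix.smul_apply, stp, Matrix.of_apply,
    Matrix.single, smul_eq_mul, ite_and, mul_ite, ite_mul, one_mul, zero_mul, mul_zero, mul_one]
  rw [Finset.sum_eq_single a]
  · rw [Finset.sum_eq_single c]
    · simp only [if_pos rfl]
      by_cases h1 : c = b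
      · by_cases h2 : d = a
        · subst h1; subst h2; simp [sgn1]
        · simp [h1, h2]; exact fun h => h2 h.symm
      · simp [h1, fun h : c = b => h1 h]
    · intro j _ hj; simp [fun h : j = c => hj h]
    · simp
  · intro i _ hi
    rw [Finset.sum_eq_zero]; intro j _
    simp [fun h : i = a => hi h]
  · simp

lemma sgn2 {N : ℕ} (x y : Idx N) :
    (-1:ℂ) ^ (par x * par y + par x + par y) *
      (-1:ℂ) ^ (par y * (par (nn x) + par (nn y))) = (-1:ℂ)^(par x) := by
  rcases x with x | x <;> rcases y with y | y <;>
    simp [par, nn, pow_add, pow_succ]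

lemma Q2_apply (N : ℕ) (a b c d : Idx N) :
    Q2 N (a,b) (c,d) = if nn a = b ∧ nn c = d then (-1:ℂ)^(par a) else 0 := by
  simp only [Q2, Matrix.sum_apply, Matrix.smul_apply, stp, Matrix.of_apply,
    Matrix.single, smul_eq_mul, ite_and, mul_ite, ite_mul, one_mul, zero_mul, mul_zero, mul_one]
  rw [Finset.sum_eq_single a]
  · rw [Finset.sum_eq_single c]
    · simp only [if_pos rfl]
      by_cases h1 : nn a = b
      · by_cases h2 : nn c = d
        · subst h1; subst h2; simp [sgn2]
        · simp [h1, h2]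
      · simp [h1]
    · intro j _ hj; simp [fun h : j = c => hj h]
    · simp
  · intro i _ hi
    rw [Finset.sum_eq_zero]; intro j _
    simp [fun h : i = a => hi h]
  · simp

lemma sum_par (N : ℕ) : ∑ c : Idx N, (-1:ℂ)^(par c) = 0 := by
  rw [Fintype.sum_sum_type]
  simp [par]


lemma nn_nn {N : ℕ} (a : Idx N) : nn (nn a) = a := by
  rcases a with a | a <;> simp [nn]

lemma nn_eq_comm {N : ℕ} (a b : Idx N) : nn a = b ↔ nn b = a := by
  constructor <;> (rintro rfl; exact nn_nn _)

/-- `PQ = -Q`, `QP = Q` and `Q² = 0` in the super tensor square of `End(ℂ^{N|N})`. -/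
theorem stmt_6 (N : ℕ) :
    P2 N * Q2 N = -Q2 N ∧ Q2 N * P2 N = Q2 N ∧ Q2 N * Q2 N = 0 := by
  refine ⟨?_, ?_, ?_⟩
  · ext ⟨a, b⟩ ⟨e, f⟩
    rw [Matrix.mul_apply, Fintype.sum_prod_type]
    simp only [P2_apply, Q2_apply, ite_and, mul_ite, ite_mul, zero_mul, mul_zero,
      Finset.sum_ite_eq, Finset.sum_ite_eq', Finset.mem_univ, if_true,
      Matrix.neg_apply]
    by_cases hef : nn e = f
    swap
    · simp [hef]
    simp only [hef, if_true, Finset.sum_ite_eq', Finset.mem_univ]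
    by_cases hab : nn b = a
    · subst hab
      rw [if_pos rfl, if_pos (nn_nn b)]
      rcases b with b | b <;> simp [nn, par]
    · rw [if_neg hab, if_neg (fun h => hab ((nn_eq_comm a b).mp h)), neg_zero]
  · ext ⟨a, b⟩ ⟨e, f⟩
    rw [Matrix.mul_apply, Fintype.sum_prod_type]
    simp only [P2_apply, Q2_apply, ite_and, mul_ite, ite_mul, zero_mul, mul_zero,
      Finset.sum_ite_eq, Finset.sum_ite_eq', Finset.mem_univ, if_true]
    by_cases hab : nn a = b <;> simp only [hab, if_true, if_false]
    simp only [nn_eq_comm f e]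
    by_cases hef : nn e = f <;> simp only [hef, if_true, if_false]
    subst hef
    rcases e with e | e <;> simp [nn, par]
  · ext ⟨a, b⟩ ⟨e, f⟩
    rw [Matrix.mul_apply, Fintype.sum_prod_type]
    simp only [Q2_apply, ite_and, mul_ite, ite_mul, zero_mul, mul_zero,
      Finset.sum_ite_eq, Finset.sum_ite_eq', Finset.mem_univ, if_true,
      Matrix.zero_apply]
    by_cases hef : nn e = f <;> by_cases hab : nn a = b <;>
      simp [hef, hab, ← Finset.mul_sum, sum_par, par]
end

section
/- If H is an element of an associative ℚ-algebra that satisfies P_{pq} H = -H for all 1 ≤ p < q ≤ n (for pairwise commuting factors 1 + P_{pq}/(p-q) whose product over p<q equals H), then H·H = n!·H; i.e., H/n! is idempotent. -/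
lemma list_prod_mul {A : Type*} [Ring A] [Algebra ℚ A] {ι : Type*} (H : A)
    (f : ι → A) (g : ι → ℚ) :
    ∀ l : List ι, (∀ x ∈ l, f x * H = g x • H) →
      (l.map f).prod * H = (l.map g).prod • H
  | [], _ => by simp
  | x :: l, h => by
    have ih := list_prod_mul H f g l (fun y hy => h y (List.mem_cons_of_mem _ hy))
    simp only [List.map_cons, List.prod_cons, mul_assoc, ih, mul_smul_comm,
      h x List.mem_cons_self, smul_smul, mul_comm]

lemma inner_prod (p m : ℕ) :
    ∏ j ∈ Finset.Ico (p+1) (p+1+m), (1 - ((p:ℚ) - (j:ℚ))⁻¹) = (m:ℚ) + 1 := by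
  induction m with
  | zero => simp
  | succ m ih =>
    rw [show p+1+(m+1) = (p+1+m)+1 by ring, Finset.prod_Ico_succ_top (by omega), ih]
    have h2 : ((p:ℚ) - ((p+1+m : ℕ):ℚ)) = -(((m:ℚ)+1)) := by push_cast; ring
    rw [h2, inv_neg, sub_neg_eq_add]
    have h1 : ((m:ℚ) + 1) ≠ 0 := by positivity
    field_simp
    simp

/-- If `H = ∏_{1 ≤ p < q ≤ n} (1 + P_{pq}/(p-q))` (factors ordered lexicographically in
`(p,q)`) and `P_{pq} H = -H` for all `p < q`, then `H·H = n!·H`,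
i.e. `H/n!` is idempotent. -/
theorem stmt_15 {A : Type*} [Ring A] [Algebra ℚ A] (n : ℕ) (P : Fin n → Fin n → A) (H : A)
    (hHdef : H =
      ((List.finRange n).map (fun p : Fin n =>
        ((List.finRange n).map (fun q : Fin n =>
          if p < q then 1 + (((p : ℕ) : ℚ) - ((q : ℕ) : ℚ))⁻¹ • P p q else 1)).prod)).prod)
    (hPH : ∀ p q : Fin n, p < q → P p q * H = -H) :
    H * H = (n.factorial : ℚ) • H := by
  have hinner : ∀ p : Fin n,
      ((List.finRange n).map (fun q : Fin n =>
        if p < q then 1 + (((p : ℕ) : ℚ) - ((q : ℕ) : ℚ))⁻¹ • P p q else 1)).prod * H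
      = ((List.finRange n).map (fun q : Fin n =>
        if p < q then 1 - (((p : ℕ) : ℚ) - ((q : ℕ) : ℚ))⁻¹ else 1)).prod • H := by
    intro p
    apply list_prod_mul
    intro q _
    by_cases hpq : p < q
    · simp only [hpq, if_pos]
      rw [add_mul, one_mul, smul_mul_assoc, hPH p q hpq, smul_neg, sub_smul, one_smul]
      ring_nf
      abel
    · simp [hpq]
  have houter :
      ((List.finRange n).map (fun p : Fin n =>
        ((List.finRange n).map (fun q : Fin n =>
          if p < q then 1 + (((p : ℕ) : ℚ) - ((q : ℕ) : ℚ))⁻¹ • P p q else 1)).prod)).prod * H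
      = ((List.finRange n).map (fun p : Fin n =>
        ((List.finRange n).map (fun q : Fin n =>
          if p < q then 1 - (((p : ℕ) : ℚ) - ((q : ℕ) : ℚ))⁻¹ else 1)).prod)).prod • H := by
    apply list_prod_mul
    intro p _
    exact hinner p
  -- scalar computation
  have hscalar : ((List.finRange n).map (fun p : Fin n =>
        ((List.finRange n).map (fun q : Fin n =>
          if p < q then 1 - (((p : ℕ) : ℚ) - ((q : ℕ) : ℚ))⁻¹ else 1)).prod)).prod
      = (n.factorial : ℚ) := by
    rw [← Fin.prod_univ_def]
    have hq : ∀ p : Fin n,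
        ((List.finRange n).map (fun q : Fin n =>
          if p < q then 1 - (((p : ℕ) : ℚ) - ((q : ℕ) : ℚ))⁻¹ else 1)).prod
        = (n : ℚ) - (p : ℕ) := by
      intro p
      rw [← Fin.prod_univ_def]
      have hcongr : ∀ q : Fin n, (if p < q then 1 - (((p:ℕ):ℚ) - ((q:ℕ):ℚ))⁻¹ else 1)
          = (fun j : ℕ => if (p:ℕ) < j then 1 - (((p:ℕ):ℚ) - (j:ℚ))⁻¹ else 1) (q:ℕ) := by
        intro q
        have h : (p < q) = ((p:ℕ) < (q:ℕ)) := propext Fin.lt_def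
        simp only [h]
      rw [Finset.prod_congr rfl (fun q _ => hcongr q)]
      rw [Fin.prod_univ_eq_prod_range (fun j : ℕ =>
        if (p:ℕ) < j then 1 - (((p : ℕ) : ℚ) - (j : ℚ))⁻¹ else 1)]
      rw [← Finset.prod_filter]
      have hfil : (Finset.range n).filter (fun j => (p:ℕ) < j)
          = Finset.Ico ((p:ℕ)+1) ((p:ℕ)+1+(n-(p:ℕ)-1)) := by
        ext j
        simp only [Finset.mem_filter, Finset.mem_range, Finset.mem_Ico]
        omega
      rw [hfil, inner_prod]
      have hp : (p:ℕ) < n := p.isLt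
      rw [Nat.cast_sub (by omega : 1 ≤ n - (p:ℕ)), Nat.cast_sub (by omega : (p:ℕ) ≤ n)]
      ring
    rw [Finset.prod_congr rfl (fun p _ => hq p)]
    rw [Fin.prod_univ_eq_prod_range (fun j : ℕ => (n:ℚ) - j)]
    rw [← Finset.prod_range_reflect]
    rw [show ((n.factorial : ℕ) : ℚ) = ((∏ x ∈ Finset.range n, (x+1) : ℕ) : ℚ) by
      rw [Finset.prod_range_add_one_eq_factorial]]
    push_cast
    apply Finset.prod_congr rfl
    intro j hj
    simp only [Finset.mem_range] at hj
    rw [Nat.cast_sub (by omega), Nat.cast_sub (by omega)]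
    push_cast
    ring
  calc H * H = _ := by nth_rewrite 1 [hHdef]; rfl
  _ = (n.factorial : ℚ) • H := by rw [houter, hscalar]
end
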